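/- Let G be a complete multipartite graph on n vertices with independence number α(G), and let H be any finite simple graph. Then π(G ∘ H) = π(H) + (n − α(G))·|V(H)|. -/

import Mathlib

/-- A list is a repetition if it is of the form `w ++ w` for a nonempty `w`. -/
def IsRepetition {α : Type*} (l : List α) : Prop := ∃ w : List α, w ≠ [] ∧ l = w ++ w

/-- A list is non-repetitive if no block of consecutive elements is a repetition. -/
def NonRepetitive {α : Type*} (l : List α) : Prop :=
  ∀ t : List α, t <:+: l → ¬ IsRepetition t

/-- A vertex colouring is non-repetitive if the colour sequence of every path
is not a repetition. -/
def NonRepColoring {V β : Type*} (G : SimpleGraph V) (φ : V → β) : Prop :=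
  ∀ ⦃u v : V⦄ (p : G.Walk u v), p.IsPath → ¬ IsRepetition (p.support.map φ)

/-- The Thue chromatic number: minimum number of colours of a non-repetitive colouring. -/
noncomputable def thueNumber {V : Type*} [Fintype V] (G : SimpleGraph V) : ℕ :=
  sInf {k | ∃ φ : V → Fin k, NonRepColoring G φ}

/-- The Thue choice number: least `k` such that from any lists of size at least `k`
one can choose a non-repetitive colouring. -/
noncomputable def thueChoiceNumber {V : Type*} [Fintype V] (G : SimpleGraph V) : ℕ :=
  sInf {k | ∀ L : V → Finset ℕ, (∀ v, k ≤ (L v).card) →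
    ∃ φ : V → ℕ, (∀ v, φ v ∈ L v) ∧ NonRepColoring G φ}

/-- The independence number of a graph. -/
noncomputable def indepNum {V : Type*} [Fintype V] (G : SimpleGraph V) : ℕ :=
  sSup {n | ∃ s : Finset V, (∀ a ∈ s, ∀ b ∈ s, ¬ G.Adj a b) ∧ s.card = n}

/-- The lexicographic product of two simple graphs. -/
def lexProd {V W : Type*} (G : SimpleGraph V) (H : SimpleGraph W) : SimpleGraph (V × W) where
  Adj x y := G.Adj x.1 y.1 ∨ (x.1 = y.1 ∧ H.Adj x.2 y.2)
  symm := by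
    constructor
    rintro x y (h | ⟨h1, h2⟩)
    · exact Or.inl h.symm
    · exact Or.inr ⟨h1.symm, h2.symm⟩
  loopless := by
    constructor
    rintro x (h | ⟨h1, h2⟩)
    · exact G.loopless.irrefl _ h
    · exact H.loopless.irrefl _ h2

/-! Upper bound: colour the copies of `H` over a maximum independent set `S` of `G` by an
optimal non-repetitive colouring of `H`, and each of the remaining `(n - α(G))·|V(H)|` vertices
by a colour of its own. A square path cannot meet a uniquely coloured vertex, and a path
inside `S × V(H)` uses no edge of `G`, so it stays in a single copy of `H`.

Lower bound, for `G` complete multipartite: two vertices in different parts are adjacent, so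
different parts of `G ∘ H` get disjoint colour sets; if two parts both repeated a colour, a path
alternating between them would be coloured `abab`. Hence all parts but one are coloured
injectively, and the remaining one, containing a copy of `H`, needs `π(H)` colours. -/

open Finset Function

namespace IsRepetition

variable {α β : Type*} {l : List α} {f : α → β}

lemma map (f : α → β) (h : IsRepetition l) : IsRepetition (l.map f) := by
  obtain ⟨w, hw, rfl⟩ := h
  exact ⟨w.map f, by simpa using hw, List.map_append⟩

lemma of_map (hf : Injective f) (h : IsRepetition (l.map f)) : IsRepetition l := by
  obtain ⟨w, hw, hl⟩ := h
  obtain ⟨a, b, rfl, ha, hb⟩ := List.map_eq_append_iff.1 hl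
  have hab : a = b := List.map_injective_iff.2 hf (ha.trans hb.symm)
  exact ⟨a, by rintro rfl; exact hw (by simpa using ha.symm), by rw [hab]⟩

lemma not_of_nodup (hl : l.Nodup) : ¬ IsRepetition l := by
  rintro ⟨w, hw, rfl⟩
  obtain ⟨a, ha⟩ := List.exists_mem_of_ne_nil w hw
  exact List.disjoint_of_nodup_append hl ha ha

lemma exists_ne_map_eq (hl : l.Nodup) (h : IsRepetition (l.map f)) {x : α} (hx : x ∈ l) :
    ∃ y ∈ l, y ≠ x ∧ f y = f x := by
  obtain ⟨w, -, hw⟩ := h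
  obtain ⟨a, b, rfl, ha, hb⟩ := List.map_eq_append_iff.1 hw
  have hab : a.map f = b.map f := ha.trans hb.symm
  rcases List.mem_append.1 hx with hx | hx
  · obtain ⟨y, hy, hfy⟩ := List.mem_map.1 (hab ▸ List.mem_map_of_mem hx : f x ∈ b.map f)
    exact ⟨y, List.mem_append_right a hy,
      fun h => List.disjoint_of_nodup_append hl hx (h ▸ hy), hfy⟩
  · obtain ⟨y, hy, hfy⟩ := List.mem_map.1 (hab ▸ List.mem_map_of_mem hx : f x ∈ a.map f)
    exact ⟨y, List.mem_append_left b hy,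
      fun h => List.disjoint_of_nodup_append hl (h ▸ hy) hx, hfy⟩

end IsRepetition

section NonRepColoring

open SimpleGraph

variable {V W β γ : Type*} {G : SimpleGraph V} {φ : V → β}

lemma nonRepColoring_comp_iff {g : β → γ} (hg : Injective g) :
    NonRepColoring G (g ∘ φ) ↔ NonRepColoring G φ := by
  refine forall₄_congr fun _ _ p _ => not_congr ?_
  rw [← List.map_map]
  exact ⟨.of_map hg, .map g⟩

lemma nonRepColoring_of_injective (hφ : Injective φ) : NonRepColoring G φ :=
  fun _ _ _ hp => IsRepetition.not_of_nodup (hp.support_nodup.map hφ)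

lemma NonRepColoring.comp_embedding {H : SimpleGraph W} (hφ : NonRepColoring G φ) (f : H ↪g G) :
    NonRepColoring H (φ ∘ f) := fun _ _ p hp => by
  simpa [Walk.support_map, List.map_map] using
    hφ (p.map f.toHom) (hp.map f.injective)

variable [Fintype V]

lemma thueNumber_le_card [Fintype β] (hφ : NonRepColoring G φ) :
    thueNumber G ≤ Fintype.card β :=
  Nat.sInf_le ⟨Fintype.equivFin β ∘ φ, (nonRepColoring_comp_iff (Equiv.injective _)).2 hφ⟩

lemma thueNumber_le_card_image [DecidableEq β] (hφ : NonRepColoring G φ) :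
    thueNumber G ≤ #(univ.image φ) := by
  have hψ : NonRepColoring G
      (fun v => (⟨φ v, mem_image_of_mem φ (mem_univ v)⟩ : univ.image φ)) :=
    (nonRepColoring_comp_iff Subtype.val_injective).1 hφ
  simpa using thueNumber_le_card hψ

lemma exists_nonRepColoring_fin_thueNumber :
    ∃ φ : V → Fin (thueNumber G), NonRepColoring G φ :=
  Nat.sInf_mem (s := {k | ∃ φ : V → Fin k, NonRepColoring G φ})
    ⟨_, _, nonRepColoring_of_injective (Fintype.equivFin V).injective⟩

end NonRepColoring

lemma indepNum_eq_indepNum {V : Type*} [Fintype V] (G : SimpleGraph V) :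
    _root_.indepNum G = G.indepNum := by
  unfold _root_.indepNum SimpleGraph.indepNum
  congr! with n s
  simp only [SimpleGraph.isNIndepSet_iff, SimpleGraph.isIndepSet_iff, Set.Pairwise, mem_coe,
    and_congr_left_iff]
  refine fun _ => ⟨fun h a ha b hb _ => h a ha b hb, fun h a ha b hb => ?_⟩
  rcases eq_or_ne a b with rfl | hab
  exacts [G.irrefl, h ha hb hab]

namespace lexProd

open SimpleGraph

variable {V W β : Type*} (G : SimpleGraph V) {H : SimpleGraph W}

def fiberEmbedding (v : V) : H ↪g lexProd G H where
  toFun := Prod.mk v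
  inj' := Prod.mk_right_injective v
  map_rel_iff' := by simp [lexProd]

variable {G}

lemma exists_walk_of_not_adj_fst {u v : V × W} (p : (lexProd G H).Walk u v)
    (hp : ∀ d ∈ p.darts, ¬ G.Adj d.fst.1 d.snd.1) :
    ∃ q : H.Walk u.2 v.2, p.support = q.support.map (Prod.mk u.1) := by
  induction p with
  | nil => exact ⟨.nil, rfl⟩
  | @cons u x v h p ih =>
    obtain ⟨q, hq⟩ := ih fun d hd => hp d (List.mem_cons_of_mem _ hd)
    obtain ⟨hux, hH⟩ := h.resolve_left (hp _ List.mem_cons_self)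
    refine ⟨.cons hH q, ?_⟩
    simp [hq, ← hux]

def extendColoring [DecidableEq V] (s : Finset V) (ψ : W → β) :
    V × W → β ⊕ ({v // v ∉ s} × W) :=
  fun x => if h : x.1 ∈ s then .inl (ψ x.2) else .inr (⟨x.1, h⟩, x.2)

lemma nonRepColoring_extendColoring [DecidableEq V] {s : Finset V} (hs : G.IsIndepSet s)
    {ψ : W → β} (hψ : NonRepColoring H ψ) :
    NonRepColoring (lexProd G H) (extendColoring s ψ) := by
  intro u v p hp hrep
  by_cases hps : ∀ x ∈ p.support, x.1 ∈ s
  · obtain ⟨q, hq⟩ := exists_walk_of_not_adj_fst p fun d hd =>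
      fun hG => hs (hps _ (p.dart_fst_mem_support_of_mem_darts hd))
        (hps _ (p.dart_snd_mem_support_of_mem_darts hd)) hG.ne hG
    have hu : u.1 ∈ s := hps u p.start_mem_support
    have hmap : p.support.map (extendColoring s ψ) = (q.support.map ψ).map Sum.inl := by
      simp [hq, List.map_map, Function.comp_def, extendColoring, hu]
    refine hψ q ?_ (IsRepetition.of_map Sum.inl_injective (hmap ▸ hrep))
    exact Walk.isPath_def _ |>.2 (List.Nodup.of_map _ (hq ▸ hp.support_nodup))
  · push Not at hps
    obtain ⟨x, hx, hxs⟩ := hps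
    obtain ⟨y, -, hyx, hxy⟩ := hrep.exists_ne_map_eq hp.support_nodup hx
    have hys : y.1 ∉ s := fun hys => by simp [extendColoring, hys, hxs] at hxy
    simp only [extendColoring, hys, hxs, dite_false, Sum.inr.injEq, Prod.mk.injEq,
      Subtype.mk.injEq] at hxy
    exact hyx (Prod.ext hxy.1 hxy.2)

theorem thueNumber_le_of_isIndepSet [Fintype V] [Fintype W] {s : Finset V}
    (hs : G.IsIndepSet s) :
    thueNumber (lexProd G H) ≤ thueNumber H + (Fintype.card V - #s) * Fintype.card W := by
  classical
  obtain ⟨ψ, hψ⟩ := exists_nonRepColoring_fin_thueNumber (G := H)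
  simpa [Fintype.card_subtype_compl] using
    thueNumber_le_card (nonRepColoring_extendColoring hs hψ)

theorem thueNumber_le [Fintype V] [Fintype W] :
    thueNumber (lexProd G H) ≤ thueNumber H + (Fintype.card V - G.indepNum) * Fintype.card W := by
  obtain ⟨s, hs⟩ := G.exists_isNIndepSet_indepNum
  simpa [hs.card_eq] using thueNumber_le_of_isIndepSet hs.isIndepSet

end lexProd

section CompleteMultipartite

open SimpleGraph

variable {ι : Type*} {V : ι → Type*} {W β : Type*} {H : SimpleGraph W}
  {φ : (Σ i, V i) × W → β}

lemma card_le_indepNum_completeMultipartiteGraph [Fintype ι] [∀ i, Fintype (V i)] (i : ι) :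
    Fintype.card (V i) ≤ (completeMultipartiteGraph V).indepNum := by
  have hi : (completeMultipartiteGraph V).IsIndepSet
      ((univ.map (Embedding.sigmaMk i) : Finset (Σ i, V i)) : Set (Σ i, V i)) := by
    intro x hx y hy _
    simp only [coe_map, coe_univ, Set.image_univ, Set.mem_range] at hx hy
    obtain ⟨a, rfl⟩ := hx
    obtain ⟨b, rfl⟩ := hy
    simp
  simpa using hi.card_le_indepNum

def partColoring (φ : (Σ i, V i) × W → β) (i : ι) : V i × W → β :=
  fun p => φ (⟨i, p.1⟩, p.2)

lemma lexProd_completeMultipartiteGraph_adj {x y : (Σ i, V i) × W} (h : x.1.1 ≠ y.1.1) :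
    (lexProd (completeMultipartiteGraph V) H).Adj x y :=
  Or.inl h

namespace NonRepColoring

lemma disjoint_image_partColoring [∀ i, Fintype (V i)] [Fintype W] [DecidableEq β]
    (hφ : NonRepColoring (lexProd (completeMultipartiteGraph V) H) φ) {i j : ι} (hij : i ≠ j) :
    Disjoint (univ.image (partColoring φ i)) (univ.image (partColoring φ j)) := by
  refine disjoint_left.2 fun c hci hcj => ?_
  obtain ⟨p, -, rfl⟩ := mem_image.1 hci
  obtain ⟨q, -, hq⟩ := mem_image.1 hcj
  have hadj := lexProd_completeMultipartiteGraph_adj (H := H)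
    (x := (⟨i, p.1⟩, p.2)) (y := (⟨j, q.1⟩, q.2)) hij
  exact hφ hadj.toWalk (Walk.IsPath.of_adj hadj)
    ⟨[partColoring φ i p], by simp, by simpa [partColoring] using hq⟩

lemma injective_partColoring_or (hφ : NonRepColoring (lexProd (completeMultipartiteGraph V) H) φ)
    {i j : ι} (hij : i ≠ j) :
    Injective (partColoring φ i) ∨ Injective (partColoring φ j) := by
  by_contra! h
  obtain ⟨⟨p, p', hp, hpp'⟩, ⟨q, q', hq, hqq'⟩⟩ :=
    And.imp not_injective_iff.1 not_injective_iff.1 h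
  let a : (Σ i, V i) × W := (⟨i, p.1⟩, p.2)
  let a' : (Σ i, V i) × W := (⟨i, p'.1⟩, p'.2)
  let b : (Σ i, V i) × W := (⟨j, q.1⟩, q.2)
  let b' : (Σ i, V i) × W := (⟨j, q'.1⟩, q'.2)
  have hab := lexProd_completeMultipartiteGraph_adj (H := H) (x := a) (y := b) hij
  have hba' := lexProd_completeMultipartiteGraph_adj (H := H) (x := b) (y := a') hij.symm
  have ha'b' := lexProd_completeMultipartiteGraph_adj (H := H) (x := a') (y := b') hij
  let w := Walk.cons hab (.cons hba' (.cons ha'b' .nil))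
  have hw : w.IsPath := by
    rw [Walk.isPath_def]
    simpa [w, a, a', b, b', hij, hij.symm, Prod.ext_iff] using And.intro hpp' hqq'
  exact hφ w hw ⟨[φ a, φ b], by simp, by
    simpa [w, a, a', b, b', partColoring] using And.intro hp.symm hq.symm⟩

lemma sum_card_image_partColoring_le [Fintype ι] [∀ i, Fintype (V i)] [Fintype W] [Fintype β]
    [DecidableEq β] (hφ : NonRepColoring (lexProd (completeMultipartiteGraph V) H) φ) :
    ∑ i, #(univ.image (partColoring φ i)) ≤ Fintype.card β := by
  rw [← card_biUnion fun i _ j _ hij => hφ.disjoint_image_partColoring hij]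
  exact card_le_univ _

lemma thueNumber_le_card_image_partColoring [∀ i, Fintype (V i)] [Fintype W] [DecidableEq β]
    (hφ : NonRepColoring (lexProd (completeMultipartiteGraph V) H) φ) {i : ι} (u : V i) :
    thueNumber H ≤ #(univ.image (partColoring φ i)) := by
  refine (thueNumber_le_card_image (hφ.comp_embedding (lexProd.fiberEmbedding _ ⟨i, u⟩))).trans
    (card_le_card fun c hc => ?_)
  obtain ⟨w, -, rfl⟩ := mem_image.1 hc
  exact mem_image_of_mem (partColoring φ i) (mem_univ (u, w))

lemma exists_forall_ne_injective_partColoring [Nonempty (Σ i, V i)]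
    (hφ : NonRepColoring (lexProd (completeMultipartiteGraph V) H) φ) :
    ∃ i, Nonempty (V i) ∧ ∀ j ≠ i, Injective (partColoring φ j) := by
  by_cases h : ∃ i, ¬ Injective (partColoring φ i)
  · obtain ⟨i, hi⟩ := h
    obtain ⟨p, -, -⟩ := not_injective_iff.1 hi
    exact ⟨i, ⟨p.1⟩, fun j hj => (hφ.injective_partColoring_or hj).resolve_right hi⟩
  · obtain ⟨⟨i, u⟩⟩ := ‹Nonempty (Σ i, V i)›
    exact ⟨i, ⟨u⟩, fun j _ => not_not.1 (not_exists.1 h j)⟩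

end NonRepColoring

theorem le_thueNumber_lexProd_completeMultipartiteGraph [Fintype ι] [∀ i, Fintype (V i)]
    [Nonempty (Σ i, V i)] [Fintype W] :
    thueNumber H + (Fintype.card (Σ i, V i) - (completeMultipartiteGraph V).indepNum) *
      Fintype.card W ≤ thueNumber (lexProd (completeMultipartiteGraph V) H) := by
  classical
  obtain ⟨φ, hφ⟩ :=
    exists_nonRepColoring_fin_thueNumber (G := lexProd (completeMultipartiteGraph V) H)
  obtain ⟨i, ⟨u⟩, hinj⟩ := hφ.exists_forall_ne_injective_partColoring
  have hn : Fintype.card (Σ i, V i) - (completeMultipartiteGraph V).indepNum ≤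
      ∑ j ∈ univ.erase i, Fintype.card (V j) := by
    have := card_le_indepNum_completeMultipartiteGraph (V := V) i
    rw [Fintype.card_sigma, ← add_sum_erase _ _ (mem_univ i)]
    omega
  have hrest : ∀ j ∈ univ.erase i,
      Fintype.card (V j) * Fintype.card W = #(univ.image (partColoring φ j)) := fun j hj => by
    rw [card_image_of_injective _ (hinj j (ne_of_mem_erase hj)), card_univ, Fintype.card_prod]
  calc _ ≤ thueNumber H + ∑ j ∈ univ.erase i, Fintype.card (V j) * Fintype.card W := by
        rw [← sum_mul]; gcongr
    _ ≤ #(univ.image (partColoring φ i)) +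
          ∑ j ∈ univ.erase i, #(univ.image (partColoring φ j)) := by
        rw [sum_congr rfl hrest]
        exact Nat.add_le_add_right (hφ.thueNumber_le_card_image_partColoring u) _
    _ = ∑ j, #(univ.image (partColoring φ j)) :=
        add_sum_erase _ (fun j => #(univ.image (partColoring φ j))) (mem_univ i)
    _ ≤ Fintype.card (Fin _) := hφ.sum_card_image_partColoring_le
    _ = _ := Fintype.card_fin _

end CompleteMultipartite

/-- `π(G ∘ H) = π(H) + (n - α(G))·|V(H)|` for a complete multipartite graph `G`. -/
theorem thueNumber_lexProd_completeMultipartite {ι : Type*} [Fintype ι]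
    (V : ι → Type*) [∀ i, Fintype (V i)] [Nonempty (Σ i, V i)]
    {W : Type*} [Fintype W] (H : SimpleGraph W) :
    thueNumber (lexProd (SimpleGraph.completeMultipartiteGraph V) H) =
      thueNumber H +
        (Fintype.card (Σ i, V i) - indepNum (SimpleGraph.completeMultipartiteGraph V)) *
          Fintype.card W := by
  rw [indepNum_eq_indepNum]
  exact le_antisymm lexProd.thueNumber_le le_thueNumber_lexProd_completeMultipartiteGraph
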